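/- Let φ : Ŷ → ℝ be continuous, tri-scaling-invariant, G-invariant and ĝ-admissible. Then for all real numbers x_1,…,x_m > 0, (φ−ψ̂)((1,x_1,…,x_m),(1,x_1,…,x_k),(x_{k+1},…,x_m)) ≥ (φ−ψ̂)((1,x_1,…,x_k,ζ,…,ζ),(1,x_1,…,x_k),(1,…,1)), where ζ = (x_{k+1}⋯x_m)^{1/(m−k)} occupies the last m−k coordinates of the first vector. -/

import Mathlib

open Complex MeasureTheory Finset

noncomputable section

/-- Squared norm of a complex vector. -/
def nsq {n : ℕ} (z : Fin n → ℂ) : ℝ := ∑ i, ‖z i‖ ^ 2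

/-- Laplacian at a point of a real-valued function of one complex variable. -/
def lap (f : ℂ → ℝ) (t : ℂ) : ℝ :=
  lineDeriv ℝ (fun s => lineDeriv ℝ f s 1) t 1 +
  lineDeriv ℝ (fun s => lineDeriv ℝ f s Complex.I) t Complex.I

/-- Points of the total space for Y. -/
abbrev YPt (m k : ℕ) :=
  (Fin (m + 1) → ℂ) × (Fin (k + 1) → ℂ) × (Fin (m - k) → ℂ)

/-- The point of `Fin (m+1)` corresponding to an index in `{0,...,k}`. -/
def embX (m k : ℕ) (hkm : k ≤ m) (i : Fin (k + 1)) : Fin (m + 1) :=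
  ⟨(i : ℕ), by have := i.isLt; omega⟩

/-- The point of `Fin (m+1)` corresponding to an index in `{k+1,...,m}`. -/
def embY (m k : ℕ) (hkm : k ≤ m) (j : Fin (m - k)) : Fin (m + 1) :=
  ⟨k + 1 + (j : ℕ), by have := j.isLt; omega⟩

/-- Points of `(ℂ^{m+1}\{0}) × (ℂ^{k+1}\{0}) × (ℂ^{m-k}\{0})` lifting the blow-up Y. -/
def inYhat (m k : ℕ) (hkm : k ≤ m) (p : YPt m k) : Prop :=
  p.1 ≠ 0 ∧ p.2.1 ≠ 0 ∧ p.2.2 ≠ 0 ∧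
    (∀ i j : Fin (k + 1),
      p.1 (embX m k hkm i) * p.2.1 j = p.1 (embX m k hkm j) * p.2.1 i) ∧
    (∀ i j : Fin (m - k),
      p.1 (embY m k hkm i) * p.2.2 j = p.1 (embY m k hkm j) * p.2.2 i)

def psiY1 (m k : ℕ) (p : YPt m k) : ℝ :=
  Real.log
    ((∏ i ∈ Finset.univ.filter (fun i : Fin (m + 1) => (i : ℕ) ≤ k),
        ‖p.1 i‖) ^ (4 / ((k : ℝ) + 1)) *
      (∏ j : Fin (k + 1), ‖p.2.1 j‖) ^ (2 * (k : ℝ) / ((k : ℝ) + 1)) *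
      (∏ q : Fin (m - k), ‖p.2.2 q‖) ^
        (2 * ((m : ℝ) - (k : ℝ) - 1) / ((m : ℝ) - (k : ℝ))) /
      (nsq p.1 ^ (2 : ℝ) * nsq p.2.1 ^ (k : ℝ) * nsq p.2.2 ^ ((m : ℝ) - (k : ℝ) - 1)))

def psiY2 (m k : ℕ) (p : YPt m k) : ℝ :=
  Real.log
    ((∏ i ∈ Finset.univ.filter (fun i : Fin (m + 1) => k + 1 ≤ (i : ℕ)),
        ‖p.1 i‖) ^ (4 / ((m : ℝ) - (k : ℝ))) *
      (∏ j : Fin (k + 1), ‖p.2.1 j‖) ^ (2 * (k : ℝ) / ((k : ℝ) + 1)) *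
      (∏ q : Fin (m - k), ‖p.2.2 q‖) ^
        (2 * ((m : ℝ) - (k : ℝ) - 1) / ((m : ℝ) - (k : ℝ))) /
      (nsq p.1 ^ (2 : ℝ) * nsq p.2.1 ^ (k : ℝ) * nsq p.2.2 ^ ((m : ℝ) - (k : ℝ) - 1)))

def psiY (m k : ℕ) (p : YPt m k) : ℝ := min (psiY1 m k p) (psiY2 m k p)

/-- Tri-scaling invariance. -/
def TriScalInv (m k : ℕ) (φ : YPt m k → ℝ) : Prop :=
  ∀ lam mu nu : ℂ, lam ≠ 0 → mu ≠ 0 → nu ≠ 0 →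
    ∀ p : YPt m k, φ (lam • p.1, mu • p.2.1, nu • p.2.2) = φ p

/-- Invariance under the group G acting on Y. -/
def GInvY (m k : ℕ) (hkm : k ≤ m) (φ : YPt m k → ℝ) : Prop :=
  (∀ i j : Fin (k + 1), ∀ p : YPt m k,
      φ (p.1 ∘ Equiv.swap (embX m k hkm i) (embX m k hkm j),
         p.2.1 ∘ Equiv.swap i j, p.2.2) = φ p) ∧
  (∀ i j : Fin (m - k), ∀ p : YPt m k,
      φ (p.1 ∘ Equiv.swap (embY m k hkm i) (embY m k hkm j),
         p.2.1, p.2.2 ∘ Equiv.swap i j) = φ p) ∧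
  (∀ l : Fin (k + 1), ∀ θ : ℝ, ∀ p : YPt m k,
      φ (Function.update p.1 (embX m k hkm l)
            (Complex.exp ((θ : ℂ) * Complex.I) * p.1 (embX m k hkm l)),
         Function.update p.2.1 l (Complex.exp ((θ : ℂ) * Complex.I) * p.2.1 l),
         p.2.2) = φ p) ∧
  (∀ l : Fin (m - k), ∀ θ : ℝ, ∀ p : YPt m k,
      φ (Function.update p.1 (embY m k hkm l)
            (Complex.exp ((θ : ℂ) * Complex.I) * p.1 (embY m k hkm l)),
         p.2.1,
         Function.update p.2.2 l (Complex.exp ((θ : ℂ) * Complex.I) * p.2.2 l)) = φ p)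

/-- A vector tangent to the orbit of the tri-scaling action at p. -/
def tangentY (m k : ℕ) (p v : YPt m k) : Prop :=
  ∃ a b d : ℂ, v = (a • p.1, b • p.2.1, d • p.2.2)

/-- Local potential of ĝ plus φ along a curve. -/
def FY (m k : ℕ) (φ : YPt m k → ℝ) (c : ℂ → YPt m k) (t : ℂ) : ℝ :=
  2 * Real.log (nsq (c t).1) + (k : ℝ) * Real.log (nsq (c t).2.1) +
    ((m : ℝ) - (k : ℝ) - 1) * Real.log (nsq (c t).2.2) + φ (c t)

/-- ĝ-admissibility. -/
def AdmY (m k : ℕ) (hkm : k ≤ m) (φ : YPt m k → ℝ) : Prop :=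
  ∀ r : ℝ, 0 < r → ∀ c : ℂ → YPt m k,
    DifferentiableOn ℂ c (Metric.ball 0 r) →
    (∀ t ∈ Metric.ball (0 : ℂ) r, inYhat m k hkm (c t)) →
    ContDiffOn ℝ (⊤ : ℕ∞) (FY m k φ c) (Metric.ball 0 r) ∧
    (∀ t ∈ Metric.ball (0 : ℂ) r, 0 ≤ lap (FY m k φ c) t) ∧
    (∀ t ∈ Metric.ball (0 : ℂ) r, ¬ tangentY m k (c t) (deriv c t) →
      0 < lap (FY m k φ c) t)


section Aux
variable (m k : ℕ) (x : Fin (m + 1) → ℝ)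

/-- the geometric-mean value -/
def zetav : ℝ :=
  (∏ i ∈ Finset.univ.filter (fun i : Fin (m + 1) => k + 1 ≤ (i : ℕ)), x i) ^
    (1 / ((m : ℝ) - (k : ℝ)))

def zAv : Fin (m + 1) → ℂ := fun i => if i = 0 then 1 else (x i : ℂ)

/-- the family of points -/
def cYv (hkm : k ≤ m) (w : Fin (m - k) → ℂ) : YPt m k :=
  (fun i => if h : (i : ℕ) ≤ k then zAv m x i
      else (zetav m k x : ℂ) * Complex.exp (w ⟨(i : ℕ) - (k + 1), by have := i.isLt; omega⟩),
   fun j => zAv m x (embX m k hkm j),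
   fun q => Complex.exp (w q))

def potv (p : YPt m k) : ℝ :=
  2 * Real.log (nsq p.1) + (k : ℝ) * Real.log (nsq p.2.1) +
    ((m : ℝ) - (k : ℝ) - 1) * Real.log (nsq p.2.2)

def num1v (p : YPt m k) : ℝ :=
  (∏ i ∈ Finset.univ.filter (fun i : Fin (m + 1) => (i : ℕ) ≤ k),
      ‖p.1 i‖) ^ (4 / ((k : ℝ) + 1)) *
    (∏ j : Fin (k + 1), ‖p.2.1 j‖) ^ (2 * (k : ℝ) / ((k : ℝ) + 1)) *
    (∏ q : Fin (m - k), ‖p.2.2 q‖) ^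
      (2 * ((m : ℝ) - (k : ℝ) - 1) / ((m : ℝ) - (k : ℝ)))

def num2v (p : YPt m k) : ℝ :=
  (∏ i ∈ Finset.univ.filter (fun i : Fin (m + 1) => k + 1 ≤ (i : ℕ)),
      ‖p.1 i‖) ^ (4 / ((m : ℝ) - (k : ℝ))) *
    (∏ j : Fin (k + 1), ‖p.2.1 j‖) ^ (2 * (k : ℝ) / ((k : ℝ) + 1)) *
    (∏ q : Fin (m - k), ‖p.2.2 q‖) ^
      (2 * ((m : ℝ) - (k : ℝ) - 1) / ((m : ℝ) - (k : ℝ)))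

def denv (p : YPt m k) : ℝ :=
  nsq p.1 ^ (2 : ℝ) * nsq p.2.1 ^ (k : ℝ) * nsq p.2.2 ^ ((m : ℝ) - (k : ℝ) - 1)

end Aux

-- index facts
lemma embY_not_le (m k : ℕ) (hkm : k ≤ m) (q : Fin (m - k)) :
    ¬ ((embY m k hkm q : ℕ) ≤ k) := by simp [embY]; omega

lemma embY_inj (m k : ℕ) (hkm : k ≤ m) : Function.Injective (embY m k hkm) := by
  intro a b h
  have : (a : ℕ) = b := by
    have := congrArg (fun i : Fin (m+1) => (i:ℕ)) h
    simpa [embY] using this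
  exact Fin.ext this

lemma tidx_embY (m k : ℕ) (hkm : k ≤ m) (q : Fin (m - k))
    (h : ((embY m k hkm q : ℕ)) - (k + 1) < m - k) :
    (⟨((embY m k hkm q : ℕ)) - (k + 1), h⟩ : Fin (m - k)) = q := by
  apply Fin.ext
  simp [embY]

lemma embY_tidx (m k : ℕ) (hkm : k ≤ m) (i : Fin (m + 1)) (hi : ¬ ((i : ℕ) ≤ k)) :
    embY m k hkm ⟨(i : ℕ) - (k + 1), by have := i.isLt; omega⟩ = i := by
  apply Fin.ext
  simp [embY]
  omega

lemma head_ne_embY (m k : ℕ) (hkm : k ≤ m) (i : Fin (m + 1)) (hi : (i : ℕ) ≤ k)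
    (q : Fin (m - k)) : i ≠ embY m k hkm q := by
  intro h
  have := congrArg (fun j : Fin (m+1) => (j:ℕ)) h
  simp [embY] at this
  omega

/-- reindexing the tail product -/
lemma prod_tail (m k : ℕ) (hkm : k ≤ m) (h : Fin (m + 1) → ℝ) :
    ∏ i ∈ Finset.univ.filter (fun i : Fin (m + 1) => k + 1 ≤ (i : ℕ)), h i
      = ∏ q : Fin (m - k), h (embY m k hkm q) := by
  symm
  apply Finset.prod_bij (fun q (_ : q ∈ Finset.univ) => embY m k hkm q)
  · intro q _
    simp [embY]
    omega
  · intro a _ b _ hab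
    exact embY_inj m k hkm hab
  · intro i hi
    simp at hi
    exact ⟨⟨(i : ℕ) - (k + 1), by have := i.isLt; omega⟩, Finset.mem_univ _,
      embY_tidx m k hkm i (by omega)⟩
  · intro q _
    rfl

lemma nsq_congr_abs {n : ℕ} (f g : Fin n → ℂ) (h : ∀ i, ‖f i‖ = ‖g i‖) :
    nsq f = nsq g := by
  unfold nsq
  exact Finset.sum_congr rfl fun i _ => by rw [h i]

lemma nsq_comp_equiv {n : ℕ} (f : Fin n → ℂ) (e : Equiv.Perm (Fin n)) :
    nsq (f ∘ e) = nsq f := by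
  unfold nsq
  exact Equiv.sum_comp e (fun i => ‖f i‖ ^ 2)

lemma nsq_pos {n : ℕ} (f : Fin n → ℂ) (i : Fin n) (h : f i ≠ 0) : 0 < nsq f := by
  have hfi := norm_pos_iff.mpr h
  have h1 : 0 < ‖f i‖ ^ 2 := by positivity
  have h2 : ‖f i‖ ^ 2 ≤ nsq f := by
    apply Finset.single_le_sum (f := fun j => ‖f j‖ ^ 2)
    · intro j _; positivity
    · exact Finset.mem_univ i
  linarith

lemma nsq_smul {n : ℕ} (f : Fin n → ℂ) (r : ℝ) :
    nsq (fun q => (r : ℂ) * f q) = r ^ 2 * nsq f := by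
  unfold nsq
  rw [Finset.mul_sum]
  apply Finset.sum_congr rfl
  intro i _
  rw [norm_mul, mul_pow, Complex.norm_real, Real.norm_eq_abs, _root_.sq_abs]

lemma aux_convex_of_subharm (u : ℂ → ℝ)
    (hsm : ContDiffOn ℝ (⊤ : ℕ∞) u (Metric.ball 0 3))
    (hlap : ∀ t ∈ Metric.ball (0:ℂ) 3, 0 ≤ lap u t)
    (hinv : ∀ t : ℂ, u t = u (t.re : ℂ)) :
    ConvexOn ℝ (Set.Ioo (-3:ℝ) 3) (fun s : ℝ => u (s : ℂ)) := by
  set g : ℝ → ℝ := fun s => u (s : ℂ) with hg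
  have hmaps : Set.MapsTo (fun s : ℝ => (s:ℂ)) (Set.Ioo (-3:ℝ) 3) (Metric.ball (0:ℂ) 3) := by
    intro s hs
    simp only [Metric.mem_ball, dist_zero_right, Complex.norm_real, Real.norm_eq_abs]
    rw [abs_lt]; exact ⟨hs.1, hs.2⟩
  have hgsm : ContDiffOn ℝ (⊤ : ℕ∞) g (Set.Ioo (-3:ℝ) 3) :=
    hsm.comp (Complex.ofRealCLM.contDiff.contDiffOn) hmaps
  -- line derivative in direction I is zero
  have hI : ∀ s : ℂ, lineDeriv ℝ u s Complex.I = 0 := by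
    intro s
    have : (fun τ : ℝ => u (s + τ • Complex.I)) = fun _ => u (s.re : ℂ) := by
      funext τ
      rw [hinv (s + τ • Complex.I)]
      norm_num
    rw [lineDeriv, this, deriv_const]
  have h1 : ∀ s : ℂ, lineDeriv ℝ u s 1 = deriv g s.re := by
    intro s
    have : (fun τ : ℝ => u (s + τ • (1:ℂ))) = fun τ : ℝ => g (s.re + τ) := by
      funext τ
      rw [hinv (s + τ • (1:ℂ))]
      simp [g]
    rw [lineDeriv, this, deriv_comp_const_add, add_zero]
  have hlapg : ∀ t : ℂ, lap u t = deriv (deriv g) t.re := by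
    intro t
    have h2 : (fun s : ℂ => lineDeriv ℝ u s Complex.I) = fun _ => (0:ℝ) := funext hI
    have h3 : (fun s : ℂ => lineDeriv ℝ u s 1) = fun s : ℂ => deriv g s.re := funext h1
    rw [lap, h2, h3]
    have : (fun τ : ℝ => (fun s : ℂ => deriv g s.re) (t + τ • (1:ℂ))) =
        fun τ : ℝ => deriv g (t.re + τ) := by
      funext τ; norm_num
    rw [lineDeriv, lineDeriv, this, deriv_comp_const_add, add_zero, deriv_const, add_zero]
  have hIoo : interior (Set.Ioo (-3:ℝ) 3) = Set.Ioo (-3:ℝ) 3 := isOpen_Ioo.interior_eq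
  refine convexOn_of_deriv2_nonneg (convex_Ioo _ _) hgsm.continuousOn ?_ ?_ ?_
  · rw [hIoo]; exact hgsm.differentiableOn (by simp)
  · rw [hIoo]
    exact (hgsm.deriv_of_isOpen isOpen_Ioo (m := 1) (by exact WithTop.coe_le_coe.mpr le_top)).differentiableOn one_ne_zero
  · intro s hs
    rw [hIoo] at hs
    have : deriv^[2] g s = deriv (deriv g) s := by
      simp [Function.iterate_succ, Function.iterate_one]
    rw [this]
    have hmem : (s:ℂ) ∈ Metric.ball (0:ℂ) 3 := hmaps hs
    have := hlap _ hmem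
    rwa [hlapg] at this

section Curve

variable {m k : ℕ} (hkm : k ≤ m) (x : Fin (m + 1) → ℝ)

lemma zetav_pos (hx : ∀ i, 0 < x i) : 0 < zetav m k x := by
  apply Real.rpow_pos_of_pos
  apply Finset.prod_pos
  intro i _
  exact hx i

lemma zAv_ne (hx : ∀ i, 0 < x i) (i : Fin (m + 1)) : zAv m x i ≠ 0 := by
  unfold zAv
  split
  · exact one_ne_zero
  · simp only [ne_eq, Complex.ofReal_eq_zero]
    exact (hx i).ne'

lemma cYv_fst_head (w : Fin (m - k) → ℂ) (i : Fin (m + 1)) (hi : (i : ℕ) ≤ k) :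
    (cYv m k x hkm w).1 i = zAv m x i := by
  simp only [cYv]
  rw [dif_pos hi]

lemma cYv_fst_tail (w : Fin (m - k) → ℂ) (q : Fin (m - k)) :
    (cYv m k x hkm w).1 (embY m k hkm q) = (zetav m k x : ℂ) * Complex.exp (w q) := by
  simp only [cYv]
  rw [dif_neg (embY_not_le m k hkm q), tidx_embY]

lemma cYv_fst_tail' (w : Fin (m - k) → ℂ) (i : Fin (m + 1)) (hi : ¬ ((i : ℕ) ≤ k)) :
    (cYv m k x hkm w).1 i =
      (zetav m k x : ℂ) * Complex.exp (w ⟨(i : ℕ) - (k + 1), by have := i.isLt; omega⟩) := by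
  simp only [cYv]
  rw [dif_neg hi]

lemma mem_inYhat (hklt : k < m) (hx : ∀ i, 0 < x i) (w : Fin (m - k) → ℂ) :
    inYhat m k hkm (cYv m k x hkm w) := by
  refine ⟨?_, ?_, ?_, ?_, ?_⟩
  · intro h
    have h0 := congrFun h 0
    rw [cYv_fst_head hkm x w 0 (by simp)] at h0
    rw [Pi.zero_apply] at h0
    exact zAv_ne x hx 0 h0
  · intro h
    have h0 := congrFun h 0
    simp only [cYv, Pi.zero_apply] at h0
    exact zAv_ne x hx _ h0
  · intro h
    have h0 := congrFun h ⟨0, by omega⟩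
    simp only [cYv, Pi.zero_apply] at h0
    exact Complex.exp_ne_zero _ h0
  · intro i j
    have hi : (cYv m k x hkm w).1 (embX m k hkm i) = (cYv m k x hkm w).2.1 i := by
      rw [cYv_fst_head hkm x w _ (by simp [embX]; omega)]; rfl
    have hj : (cYv m k x hkm w).1 (embX m k hkm j) = (cYv m k x hkm w).2.1 j := by
      rw [cYv_fst_head hkm x w _ (by simp [embX]; omega)]; rfl
    rw [hi, hj, mul_comm]
  · intro i j
    rw [cYv_fst_tail hkm x w i, cYv_fst_tail hkm x w j]
    show (↑(zetav m k x) * Complex.exp (w i)) * Complex.exp (w j) =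
      (↑(zetav m k x) * Complex.exp (w j)) * Complex.exp (w i)
    ring

end Curve

section Invariance

variable {m k : ℕ} (hkm : k ≤ m) (x : Fin (m + 1) → ℝ)
variable (φ : YPt m k → ℝ)

lemma phase_step (hG : GInvY m k hkm φ) (w : Fin (m - k) → ℂ) (a : Fin (m - k)) (θ : ℝ) :
    φ (cYv m k x hkm (Function.update w a (w a + (θ : ℂ) * Complex.I)))
      = φ (cYv m k x hkm w) := by
  have key := hG.2.2.2 a θ (cYv m k x hkm w)
  have hz : (cYv m k x hkm (Function.update w a (w a + (θ : ℂ) * Complex.I))).1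
      = Function.update (cYv m k x hkm w).1 (embY m k hkm a)
          (Complex.exp ((θ : ℂ) * Complex.I) * (cYv m k x hkm w).1 (embY m k hkm a)) := by
    funext i
    by_cases hi : (i : ℕ) ≤ k
    · rw [cYv_fst_head hkm x _ i hi,
        Function.update_of_ne (head_ne_embY m k hkm i hi a) _ _,
        cYv_fst_head hkm x w i hi]
    · by_cases hia : i = embY m k hkm a
      · subst hia
        rw [cYv_fst_tail hkm x _ a, Function.update_self, Function.update_self,
          cYv_fst_tail hkm x w a, Complex.exp_add]
        ring
      · have hq : (⟨(i : ℕ) - (k + 1), by have := i.isLt; omega⟩ : Fin (m - k)) ≠ a := by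
          intro hqa
          apply hia
          rw [← embY_tidx m k hkm i hi, hqa]
        rw [cYv_fst_tail' hkm x _ i hi, Function.update_of_ne hia _ _,
          cYv_fst_tail' hkm x w i hi, Function.update_of_ne hq _ _]
  have hη : (cYv m k x hkm (Function.update w a (w a + (θ : ℂ) * Complex.I))).2.2
      = Function.update (cYv m k x hkm w).2.2 a
          (Complex.exp ((θ : ℂ) * Complex.I) * (cYv m k x hkm w).2.2 a) := by
    funext q
    by_cases hq : q = a
    · subst hq
      show Complex.exp (Function.update w q (w q + (θ:ℂ) * Complex.I) q) = _
      rw [Function.update_self, Function.update_self, Complex.exp_add]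
      show _ = Complex.exp ((θ:ℂ) * Complex.I) * Complex.exp (w q)
      ring
    · show Complex.exp (Function.update w a (w a + (θ:ℂ) * Complex.I) q)
        = Function.update (cYv m k x hkm w).2.2 a _ q
      rw [Function.update_of_ne hq _ _, Function.update_of_ne hq _ _]
      rfl
  have hpt : cYv m k x hkm (Function.update w a (w a + (θ : ℂ) * Complex.I))
      = (Function.update (cYv m k x hkm w).1 (embY m k hkm a)
          (Complex.exp ((θ : ℂ) * Complex.I) * (cYv m k x hkm w).1 (embY m k hkm a)),
         (cYv m k x hkm w).2.1,
         Function.update (cYv m k x hkm w).2.2 a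
          (Complex.exp ((θ : ℂ) * Complex.I) * (cYv m k x hkm w).2.2 a)) :=
    Prod.ext hz (Prod.ext rfl hη)
  rw [hpt]
  exact key

lemma phase_all (hG : GInvY m k hkm φ) (w : Fin (m - k) → ℂ) (τ : Fin (m - k) → ℝ) :
    φ (cYv m k x hkm (fun q => w q + (τ q : ℂ) * Complex.I)) = φ (cYv m k x hkm w) := by
  classical
  have key : ∀ T : Finset (Fin (m - k)),
      φ (cYv m k x hkm (fun q => if q ∈ T then w q + (τ q : ℂ) * Complex.I else w q))
        = φ (cYv m k x hkm w) := by
    intro T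
    induction T using Finset.induction with
    | empty => simp
    | @insert a T ha ih =>
      have hfun : (fun q => if q ∈ insert a T then w q + (τ q : ℂ) * Complex.I else w q)
          = Function.update (fun q => if q ∈ T then w q + (τ q : ℂ) * Complex.I else w q) a
            ((fun q => if q ∈ T then w q + (τ q : ℂ) * Complex.I else w q) a
              + (τ a : ℂ) * Complex.I) := by
        funext q
        by_cases hq : q = a
        · subst hq
          simp [Function.update_self, ha]
        · simp only [Function.update_of_ne hq, Finset.mem_insert, hq, false_or]
      rw [hfun, phase_step hkm x φ hG _ a (τ a), ih]
  have := key Finset.univ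
  simpa using this

lemma swap_Ft (hG : GInvY m k hkm φ) (w : Fin (m - k) → ℂ) (i j : Fin (m - k)) :
    potv m k (cYv m k x hkm (w ∘ Equiv.swap i j)) + φ (cYv m k x hkm (w ∘ Equiv.swap i j))
      = potv m k (cYv m k x hkm w) + φ (cYv m k x hkm w) := by
  have hpt : cYv m k x hkm (w ∘ Equiv.swap i j)
      = ((cYv m k x hkm w).1 ∘ Equiv.swap (embY m k hkm i) (embY m k hkm j),
         (cYv m k x hkm w).2.1, (cYv m k x hkm w).2.2 ∘ Equiv.swap i j) := by
    refine Prod.ext ?_ (Prod.ext rfl ?_)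
    · funext l
      show (cYv m k x hkm (w ∘ Equiv.swap i j)).1 l
        = (cYv m k x hkm w).1 (Equiv.swap (embY m k hkm i) (embY m k hkm j) l)
      by_cases hl : (l : ℕ) ≤ k
      · have h1 : Equiv.swap (embY m k hkm i) (embY m k hkm j) l = l :=
          Equiv.swap_apply_of_ne_of_ne (head_ne_embY m k hkm l hl i)
            (head_ne_embY m k hkm l hl j)
        rw [h1, cYv_fst_head hkm x _ l hl, cYv_fst_head hkm x w l hl]
      · have hl' : l = embY m k hkm ⟨(l : ℕ) - (k + 1), by have := l.isLt; omega⟩ :=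
          (embY_tidx m k hkm l hl).symm
        set q : Fin (m - k) := ⟨(l : ℕ) - (k + 1), by have := l.isLt; omega⟩ with hqdef
        rw [hl']
        rw [(embY_inj m k hkm).swap_apply i j q]
        rw [cYv_fst_tail hkm x _ q, cYv_fst_tail hkm x w _]
        rfl
    · funext q
      rfl
  rw [hpt]
  have hφ := hG.2.1 i j (cYv m k x hkm w)
  rw [hφ]
  congr 1
  unfold potv
  rw [nsq_comp_equiv, nsq_comp_equiv]

lemma perm_Ft (hG : GInvY m k hkm φ) (σ : Equiv.Perm (Fin (m - k))) (w : Fin (m - k) → ℂ) :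
    potv m k (cYv m k x hkm (w ∘ σ)) + φ (cYv m k x hkm (w ∘ σ))
      = potv m k (cYv m k x hkm w) + φ (cYv m k x hkm w) := by
  refine Equiv.Perm.swap_induction_on (motive := fun σ => ∀ w : Fin (m - k) → ℂ,
      potv m k (cYv m k x hkm (w ∘ σ)) + φ (cYv m k x hkm (w ∘ σ))
        = potv m k (cYv m k x hkm w) + φ (cYv m k x hkm w)) σ ?_ ?_ w
  · intro w
    have : w ∘ ⇑(1 : Equiv.Perm (Fin (m - k))) = w := rfl
    rw [this]
  · intro f a b hab ih w
    have hcomp : w ∘ ⇑(Equiv.swap a b * f) = (w ∘ ⇑(Equiv.swap a b)) ∘ ⇑f := rfl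
    rw [hcomp, ih (w ∘ ⇑(Equiv.swap a b)), swap_Ft hkm x φ hG w a b]

end Invariance

section Convexity
set_option maxHeartbeats 1000000

def Ftv (m k : ℕ) (hkm : k ≤ m) (x : Fin (m + 1) → ℝ) (φ : YPt m k → ℝ)
    (y : Fin (m - k) → ℝ) : ℝ :=
  potv m k (cYv m k x hkm (fun q => (y q : ℂ)))
    + φ (cYv m k x hkm (fun q => (y q : ℂ)))

variable {m k : ℕ} (hkm : k ≤ m) (x : Fin (m + 1) → ℝ) (φ : YPt m k → ℝ)

lemma potv_re (w w' : Fin (m - k) → ℂ) (hre : ∀ q, (w q).re = (w' q).re) :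
    potv m k (cYv m k x hkm w) = potv m k (cYv m k x hkm w') := by
  have habs1 : ∀ i, ‖(cYv m k x hkm w).1 i‖
      = ‖(cYv m k x hkm w').1 i‖ := by
    intro i
    by_cases hi : (i : ℕ) ≤ k
    · rw [cYv_fst_head hkm x w i hi, cYv_fst_head hkm x w' i hi]
    · rw [cYv_fst_tail' hkm x w i hi, cYv_fst_tail' hkm x w' i hi,
        norm_mul, norm_mul, Complex.norm_exp, Complex.norm_exp, hre]
  have habs2 : ∀ q, ‖(cYv m k x hkm w).2.2 q‖
      = ‖(cYv m k x hkm w').2.2 q‖ := by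
    intro q
    show ‖Complex.exp (w q)‖ = ‖Complex.exp (w' q)‖
    rw [Complex.norm_exp, Complex.norm_exp, hre]
  unfold potv
  rw [nsq_congr_abs _ _ habs1, nsq_congr_abs _ _ habs2]
  rfl

lemma Ft_convex (hklt : k < m) (hx : ∀ i, 0 < x i) (hG : GInvY m k hkm φ)
    (hadm : AdmY m k hkm φ) : ConvexOn ℝ Set.univ (Ftv m k hkm x φ) := by
  refine ⟨convex_univ, ?_⟩
  intro y₁ _ y₂ _ a b ha hb hab
  set v : Fin (m - k) → ℝ := fun q => y₂ q - y₁ q with hv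
  set c : ℂ → YPt m k :=
    fun t => cYv m k x hkm (fun q => (y₁ q : ℂ) + t * (v q : ℂ)) with hc
  have hdiff : DifferentiableOn ℂ c (Metric.ball 0 3) := by
    apply Differentiable.differentiableOn
    apply Differentiable.prodMk
    · rw [differentiable_pi]
      intro i
      by_cases hi : (i : ℕ) ≤ k
      · simp only [cYv, dif_pos hi]
        exact differentiable_const _
      · simp only [cYv, dif_neg hi]
        apply Differentiable.const_mul
        apply Complex.differentiable_exp.comp
        apply Differentiable.const_add
        exact differentiable_id.mul (differentiable_const _)
    · apply Differentiable.prodMk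
      · exact differentiable_const _
      · rw [differentiable_pi]
        intro q
        simp only [cYv]
        apply Complex.differentiable_exp.comp
        apply Differentiable.const_add
        exact differentiable_id.mul (differentiable_const _)
  have hmem : ∀ t ∈ Metric.ball (0 : ℂ) 3, inYhat m k hkm (c t) :=
    fun t _ => mem_inYhat hkm x hklt hx _
  obtain ⟨hsm, hlap, _⟩ := hadm 3 (by norm_num) c hdiff hmem
  set u : ℂ → ℝ := FY m k φ c with hu
  have hupot : ∀ t, u t = potv m k (c t) + φ (c t) := by
    intro t
    show FY m k φ c t = _
    unfold FY potv
    ring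
  have hinv : ∀ t : ℂ, u t = u (t.re : ℂ) := by
    intro t
    have harg : (fun q => (y₁ q : ℂ) + t * (v q : ℂ))
        = fun q => ((y₁ q : ℂ) + ((t.re : ℝ) : ℂ) * (v q : ℂ))
            + ((t.im * v q : ℝ) : ℂ) * Complex.I := by
      funext q
      apply Complex.ext <;> simp
    have hct : c t = cYv m k x hkm
        (fun q => ((y₁ q : ℂ) + ((t.re : ℝ) : ℂ) * (v q : ℂ))
          + ((t.im * v q : ℝ) : ℂ) * Complex.I) := congrArg (cYv m k x hkm) harg
    have hctre : c ((t.re : ℝ) : ℂ) = cYv m k x hkm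
        (fun q => (y₁ q : ℂ) + ((t.re : ℝ) : ℂ) * (v q : ℂ)) := rfl
    rw [hupot t, hupot ((t.re : ℝ) : ℂ), hct, hctre]
    have hφeq := phase_all hkm x φ hG
      (fun q => (y₁ q : ℂ) + ((t.re : ℝ) : ℂ) * (v q : ℂ)) (fun q => t.im * v q)
    rw [hφeq]
    congr 1
    apply potv_re
    intro q
    simp
  have hcx := aux_convex_of_subharm u (by exact hsm) (by exact hlap) hinv
  have hgF : ∀ s : ℝ, u (s : ℂ)
      = Ftv m k hkm x φ (fun q => y₁ q + s * v q) := by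
    intro s
    have harg2 : (fun q => (y₁ q : ℂ) + (s : ℂ) * (v q : ℂ))
        = fun q => ((y₁ q + s * v q : ℝ) : ℂ) := by
      funext q
      push_cast
      ring
    have hcs : c (s : ℂ) = cYv m k x hkm (fun q => ((y₁ q + s * v q : ℝ) : ℂ)) :=
      congrArg (cYv m k x hkm) harg2
    rw [hupot, hcs]
    rfl
  have h3 := hcx.2 (show (0:ℝ) ∈ Set.Ioo (-3:ℝ) 3 by norm_num)
    (show (1:ℝ) ∈ Set.Ioo (-3:ℝ) 3 by norm_num) ha hb hab
  simp only [smul_eq_mul, mul_zero, mul_one, zero_add] at h3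
  rw [hgF, hgF, hgF] at h3
  have e0 : (fun q => y₁ q + (0:ℝ) * v q) = y₁ := by funext q; ring
  have e1 : (fun q => y₁ q + (1:ℝ) * v q) = y₂ := by funext q; simp [hv]
  have eb : (fun q => y₁ q + b * v q) = a • y₁ + b • y₂ := by
    funext q
    have hab' : a = 1 - b := by linarith
    simp [hv, hab']
    ring
  rw [e0, e1, eb] at h3
  simpa using h3

end Convexity

section Computation

def pntv (m k : ℕ) (hkm : k ≤ m) (x : Fin (m + 1) → ℝ) (w : Fin (m - k) → ℝ) : YPt m k :=
  cYv m k x hkm (fun q => ((w q : ℝ) : ℂ))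

variable {m k : ℕ} (hkm : k ≤ m) (x : Fin (m + 1) → ℝ)

lemma prod_abs_head_eq (w : Fin (m - k) → ℝ) :
    (∏ i ∈ Finset.univ.filter (fun i : Fin (m + 1) => (i : ℕ) ≤ k),
        ‖(pntv m k hkm x w).1 i‖)
      = ∏ i ∈ Finset.univ.filter (fun i : Fin (m + 1) => (i : ℕ) ≤ k),
          ‖zAv m x i‖ := by
  apply Finset.prod_congr rfl
  intro i hi
  simp only [Finset.mem_filter] at hi
  rw [show (pntv m k hkm x w).1 i = zAv m x i from cYv_fst_head hkm x _ i hi.2]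

lemma prod_abs_tail_eq (hx : ∀ i, 0 < x i) (w : Fin (m - k) → ℝ) :
    (∏ i ∈ Finset.univ.filter (fun i : Fin (m + 1) => k + 1 ≤ (i : ℕ)),
        ‖(pntv m k hkm x w).1 i‖)
      = zetav m k x ^ (m - k) * Real.exp (∑ q, w q) := by
  rw [prod_tail m k hkm (fun i => ‖(pntv m k hkm x w).1 i‖)]
  have key : ∀ q : Fin (m - k), ‖(pntv m k hkm x w).1 (embY m k hkm q)‖
      = zetav m k x * Real.exp (w q) := by
    intro q
    rw [show (pntv m k hkm x w).1 (embY m k hkm q)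
        = (zetav m k x : ℂ) * Complex.exp ((w q : ℂ)) from cYv_fst_tail hkm x _ q]
    rw [norm_mul, Complex.norm_real, Real.norm_eq_abs, abs_of_pos (zetav_pos x hx), Complex.norm_exp]
    simp
  rw [Finset.prod_congr rfl (fun q _ => key q), Finset.prod_mul_distrib,
    Finset.prod_const, Finset.card_univ, Fintype.card_fin, ← Real.exp_sum]

lemma prod_abs_eta_eq (w : Fin (m - k) → ℝ) :
    (∏ q : Fin (m - k), ‖(pntv m k hkm x w).2.2 q‖) = Real.exp (∑ q, w q) := by
  have key : ∀ q : Fin (m - k), ‖(pntv m k hkm x w).2.2 q‖ = Real.exp (w q) := by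
    intro q
    show ‖Complex.exp ((w q : ℂ))‖ = Real.exp (w q)
    rw [Complex.norm_exp]
    simp
  rw [Finset.prod_congr rfl (fun q _ => key q), ← Real.exp_sum]

lemma prod_abs_zeta_pos (hx : ∀ i, 0 < x i) (w : Fin (m - k) → ℝ) :
    0 < ∏ j : Fin (k + 1), ‖(pntv m k hkm x w).2.1 j‖ := by
  apply Finset.prod_pos
  intro j _
  exact norm_pos_iff.mpr (zAv_ne x hx _)

lemma prod_abs_head_pos (hx : ∀ i, 0 < x i) (w : Fin (m - k) → ℝ) :
    0 < ∏ i ∈ Finset.univ.filter (fun i : Fin (m + 1) => (i : ℕ) ≤ k),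
        ‖(pntv m k hkm x w).1 i‖ := by
  rw [prod_abs_head_eq hkm x w]
  apply Finset.prod_pos
  intro i _
  exact norm_pos_iff.mpr (zAv_ne x hx _)

lemma pntv_pos (hklt : k < m) (hx : ∀ i, 0 < x i) (w : Fin (m - k) → ℝ) :
    0 < nsq (pntv m k hkm x w).1 ∧ 0 < nsq (pntv m k hkm x w).2.1
      ∧ 0 < nsq (pntv m k hkm x w).2.2 ∧ 0 < num1v m k (pntv m k hkm x w)
      ∧ 0 < num2v m k (pntv m k hkm x w) ∧ 0 < denv m k (pntv m k hkm x w) := by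
  have hz : 0 < nsq (pntv m k hkm x w).1 := by
    apply nsq_pos _ 0
    rw [show (pntv m k hkm x w).1 0 = zAv m x 0 from cYv_fst_head hkm x _ 0 (by simp)]
    exact zAv_ne x hx 0
  have hζ : 0 < nsq (pntv m k hkm x w).2.1 := by
    apply nsq_pos _ 0
    exact zAv_ne x hx (embX m k hkm 0)
  have hη : 0 < nsq (pntv m k hkm x w).2.2 := by
    apply nsq_pos _ ⟨0, by omega⟩
    exact Complex.exp_ne_zero _
  refine ⟨hz, hζ, hη, ?_, ?_, ?_⟩
  · apply mul_pos (mul_pos ?_ ?_) ?_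
    · exact Real.rpow_pos_of_pos (prod_abs_head_pos hkm x hx w) _
    · exact Real.rpow_pos_of_pos (prod_abs_zeta_pos hkm x hx w) _
    · apply Real.rpow_pos_of_pos
      rw [prod_abs_eta_eq hkm x w]
      exact Real.exp_pos _
  · apply mul_pos (mul_pos ?_ ?_) ?_
    · apply Real.rpow_pos_of_pos
      rw [prod_abs_tail_eq hkm x hx w]
      exact mul_pos (pow_pos (zetav_pos x hx) _) (Real.exp_pos _)
    · exact Real.rpow_pos_of_pos (prod_abs_zeta_pos hkm x hx w) _
    · apply Real.rpow_pos_of_pos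
      rw [prod_abs_eta_eq hkm x w]
      exact Real.exp_pos _
  · exact mul_pos (mul_pos (Real.rpow_pos_of_pos hz _) (Real.rpow_pos_of_pos hζ _))
      (Real.rpow_pos_of_pos hη _)

lemma potv_eq_log_denv (p : YPt m k) (h1 : 0 < nsq p.1) (h2 : 0 < nsq p.2.1)
    (h3 : 0 < nsq p.2.2) : potv m k p = Real.log (denv m k p) := by
  unfold potv denv
  rw [Real.log_mul (by positivity) (by positivity),
    Real.log_mul (by positivity) (by positivity),
    Real.log_rpow h1, Real.log_rpow h2, Real.log_rpow h3]

lemma potv_add_psiY (p : YPt m k) (h1 : 0 < nsq p.1) (h2 : 0 < nsq p.2.1)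
    (h3 : 0 < nsq p.2.2) (hn1 : 0 < num1v m k p) (hn2 : 0 < num2v m k p) :
    potv m k p + psiY m k p
      = min (Real.log (num1v m k p)) (Real.log (num2v m k p)) := by
  have hden : 0 < denv m k p :=
    mul_pos (mul_pos (Real.rpow_pos_of_pos h1 _) (Real.rpow_pos_of_pos h2 _))
      (Real.rpow_pos_of_pos h3 _)
  have hpsi1 : psiY1 m k p = Real.log (num1v m k p) - Real.log (denv m k p) := by
    rw [show psiY1 m k p = Real.log (num1v m k p / denv m k p) from rfl,
      Real.log_div hn1.ne' hden.ne']
  have hpsi2 : psiY2 m k p = Real.log (num2v m k p) - Real.log (denv m k p) := by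
    rw [show psiY2 m k p = Real.log (num2v m k p / denv m k p) from rfl,
      Real.log_div hn2.ne' hden.ne']
  unfold psiY
  rw [hpsi1, hpsi2, potv_eq_log_denv p h1 h2 h3]
  rw [← min_add_add_left]
  congr 1 <;> ring

lemma nums_eq (hklt : k < m) (hx : ∀ i, 0 < x i) (w w' : Fin (m - k) → ℝ)
    (hs : ∑ q, w q = ∑ q, w' q) :
    num1v m k (pntv m k hkm x w) = num1v m k (pntv m k hkm x w')
      ∧ num2v m k (pntv m k hkm x w) = num2v m k (pntv m k hkm x w') := by
  constructor
  · unfold num1v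
    rw [prod_abs_head_eq hkm x w, prod_abs_head_eq hkm x w',
      prod_abs_eta_eq hkm x w, prod_abs_eta_eq hkm x w', hs]
    rfl
  · unfold num2v
    rw [prod_abs_tail_eq hkm x hx w, prod_abs_tail_eq hkm x hx w',
      prod_abs_eta_eq hkm x w, prod_abs_eta_eq hkm x w', hs]
    rfl

end Computation

section ScaleJensen

lemma psiY_scale (m k : ℕ) (hklt : k < m) (z : Fin (m + 1) → ℂ) (ζ : Fin (k + 1) → ℂ)
    (η : Fin (m - k) → ℂ) (r : ℝ) (hr : 0 < r) (hη : ∀ q, η q ≠ 0) :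
    psiY m k (z, ζ, fun q => (r : ℂ) * η q) = psiY m k (z, ζ, η) := by
  have hP : (∏ q : Fin (m - k), ‖(r : ℂ) * η q‖)
      = r ^ (m - k) * ∏ q : Fin (m - k), ‖η q‖ := by
    have : ∀ q : Fin (m - k), ‖(r : ℂ) * η q‖ = r * ‖η q‖ := by
      intro q
      rw [norm_mul, Complex.norm_real, Real.norm_eq_abs, abs_of_pos hr]
    rw [Finset.prod_congr rfl (fun q _ => this q), Finset.prod_mul_distrib,
      Finset.prod_const, Finset.card_univ, Fintype.card_fin]
  have hPpos : 0 < ∏ q : Fin (m - k), ‖η q‖ :=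
    Finset.prod_pos (fun q _ => norm_pos_iff.mpr (hη q))
  have hnsq : nsq (fun q => (r : ℂ) * η q) = r ^ 2 * nsq η := nsq_smul η r
  have hnsqpos : 0 < nsq η := nsq_pos η ⟨0, by omega⟩ (hη _)
  have hcast : ((m - k : ℕ) : ℝ) = (m : ℝ) - (k : ℝ) := by
    push_cast [Nat.cast_sub hklt.le]
    ring
  have hmk : (m : ℝ) - (k : ℝ) ≠ 0 := by
    have : (k : ℝ) < (m : ℝ) := by exact_mod_cast hklt
    linarith
  set s : ℝ := 2 * ((m : ℝ) - (k : ℝ) - 1) with hs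
  have hC : (∏ q : Fin (m - k), ‖(r : ℂ) * η q‖) ^
        (2 * ((m : ℝ) - (k : ℝ) - 1) / ((m : ℝ) - (k : ℝ)))
      = r ^ s * (∏ q : Fin (m - k), ‖η q‖) ^
        (2 * ((m : ℝ) - (k : ℝ) - 1) / ((m : ℝ) - (k : ℝ))) := by
    rw [hP, Real.mul_rpow (by positivity) hPpos.le, ← Real.rpow_natCast r (m - k),
      ← Real.rpow_mul hr.le]
    congr 1
    rw [hcast, hs]
    field_simp
  have hD : nsq (fun q => (r : ℂ) * η q) ^ ((m : ℝ) - (k : ℝ) - 1)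
      = r ^ s * nsq η ^ ((m : ℝ) - (k : ℝ) - 1) := by
    rw [hnsq, Real.mul_rpow (by positivity) hnsqpos.le, ← Real.rpow_natCast r 2,
      ← Real.rpow_mul hr.le]
    congr 1
    all_goals
      rw [hs]
      push_cast
      ring
  have hrs : (0 : ℝ) < r ^ s := Real.rpow_pos_of_pos hr _
  have key : ∀ Nn Dd X Y : ℝ, Nn * (r ^ s * X) / (Dd * (r ^ s * Y)) = Nn * X / (Dd * Y) := by
    intro Nn Dd X Y
    rw [show Nn * (r ^ s * X) = r ^ s * (Nn * X) from by ring,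
      show Dd * (r ^ s * Y) = r ^ s * (Dd * Y) from by ring,
      mul_div_mul_left _ _ hrs.ne']
  have h1 : psiY1 m k (z, ζ, fun q => (r : ℂ) * η q) = psiY1 m k (z, ζ, η) := by
    unfold psiY1
    dsimp only
    rw [hC, hD, key]
  have h2 : psiY2 m k (z, ζ, fun q => (r : ℂ) * η q) = psiY2 m k (z, ζ, η) := by
    unfold psiY2
    dsimp only
    rw [hC, hD, key]
  unfold psiY
  rw [h1, h2]

lemma jensenY {m k : ℕ} (hkm : k ≤ m) (x : Fin (m + 1) → ℝ) (φ : YPt m k → ℝ)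
    (hklt : k < m) (hx : ∀ i, 0 < x i) (hG : GInvY m k hkm φ) (hadm : AdmY m k hkm φ)
    (ys : Fin (m - k) → ℝ) (hsum : ∑ q, ys q = 0) :
    Ftv m k hkm x φ 0 ≤ Ftv m k hkm x φ ys := by
  classical
  have npos : 0 < m - k := by omega
  have hconv := Ft_convex hkm x φ hklt hx hG hadm
  set pfun : Equiv.Perm (Fin (m - k)) → (Fin (m - k) → ℝ) := fun σ => ys ∘ σ with hpfun
  have hconst : ∀ q q' : Fin (m - k),
      (∑ σ : Equiv.Perm (Fin (m - k)), ys (σ q)) = ∑ σ : Equiv.Perm (Fin (m - k)), ys (σ q') := by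
    intro q q'
    apply Fintype.sum_equiv (Equiv.mulRight (Equiv.swap q' q))
    intro σ
    rw [Equiv.coe_mulRight, Equiv.Perm.mul_apply, Equiv.swap_apply_left]
  have htot : ∑ q : Fin (m - k), ∑ σ : Equiv.Perm (Fin (m - k)), ys (σ q) = 0 := by
    rw [Finset.sum_comm]
    have hz : ∀ σ : Equiv.Perm (Fin (m - k)), ∑ q, ys (σ q) = 0 := by
      intro σ
      rw [Equiv.sum_comp σ ys]
      exact hsum
    simp [hz]
  have hS : ∀ q : Fin (m - k), ∑ σ : Equiv.Perm (Fin (m - k)), ys (σ q) = 0 := by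
    have q0 : Fin (m - k) := ⟨0, npos⟩
    have h1 : ∑ q : Fin (m - k), ∑ σ : Equiv.Perm (Fin (m - k)), ys (σ q)
        = (m - k : ℕ) * ∑ σ : Equiv.Perm (Fin (m - k)), ys (σ q0) := by
      rw [Finset.sum_congr rfl (fun q _ => hconst q q0), Finset.sum_const,
        Finset.card_univ, Fintype.card_fin, nsmul_eq_mul]
    have h2 : ((m - k : ℕ) : ℝ) * ∑ σ : Equiv.Perm (Fin (m - k)), ys (σ q0) = 0 := by
      rw [← h1]; exact htot
    have h3 : ∑ σ : Equiv.Perm (Fin (m - k)), ys (σ q0) = 0 := by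
      have hne : ((m - k : ℕ) : ℝ) ≠ 0 := by
        simp only [ne_eq, Nat.cast_eq_zero]
        omega
      exact (mul_eq_zero.1 h2).resolve_left hne
    intro q
    rw [hconst q q0, h3]
  have hsum0 : ∑ σ : Equiv.Perm (Fin (m - k)), pfun σ = 0 := by
    funext q
    rw [Finset.sum_apply]
    exact hS q
  have hwpos : (0 : ℝ) < ∑ _σ : Equiv.Perm (Fin (m - k)), (1 : ℝ) := by
    rw [Finset.sum_const, Finset.card_univ, nsmul_eq_mul, mul_one]
    exact_mod_cast Fintype.card_pos
  have hcm := hconv.map_centerMass_le (t := Finset.univ) (w := fun _ => (1 : ℝ))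
    (p := pfun) (fun _ _ => zero_le_one) hwpos (fun _ _ => Set.mem_univ _)
  have hl : Finset.univ.centerMass (fun _ : Equiv.Perm (Fin (m - k)) => (1 : ℝ)) pfun = 0 := by
    unfold Finset.centerMass
    rw [show (∑ σ : Equiv.Perm (Fin (m - k)), (1 : ℝ) • pfun σ) = 0 from by
      simpa [one_smul] using hsum0]
    rw [smul_zero]
  have hFp : ∀ σ : Equiv.Perm (Fin (m - k)),
      Ftv m k hkm x φ (ys ∘ σ) = Ftv m k hkm x φ ys := by
    intro σ
    exact perm_Ft hkm x φ hG σ (fun q => ((ys q : ℝ) : ℂ))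
  have hcard : ((Fintype.card (Equiv.Perm (Fin (m - k)))) : ℝ) ≠ 0 := by
    simp [Fintype.card_ne_zero]
  have hr : Finset.univ.centerMass (fun _ : Equiv.Perm (Fin (m - k)) => (1 : ℝ))
      (Ftv m k hkm x φ ∘ pfun) = Ftv m k hkm x φ ys := by
    unfold Finset.centerMass
    rw [show (∑ σ : Equiv.Perm (Fin (m - k)), (1 : ℝ) • (Ftv m k hkm x φ ∘ pfun) σ)
        = (Fintype.card (Equiv.Perm (Fin (m - k)))) • Ftv m k hkm x φ ys from by
      rw [show (fun σ : Equiv.Perm (Fin (m - k)) => (1 : ℝ) • (Ftv m k hkm x φ ∘ pfun) σ)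
          = fun _ => Ftv m k hkm x φ ys from ?_]
      · rw [Finset.sum_const, Finset.card_univ]
      · funext σ
        rw [one_smul]
        exact hFp σ]
    rw [Finset.sum_const, Finset.card_univ, nsmul_eq_mul, mul_one, nsmul_eq_mul,
      smul_eq_mul, inv_mul_cancel_left₀ hcard]
  rw [hl, hr] at hcm
  exact hcm

end ScaleJensen

section Main

lemma mainY (m k : ℕ) (hm : 2 ≤ m) (hk : 1 ≤ k) (hkm1 : k ≤ m - 1) (hkm' : k ≤ m)
    (φ : YPt m k → ℝ) (hscal : TriScalInv m k φ) (hG : GInvY m k hkm' φ)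
    (hadm : AdmY m k hkm' φ) (x : Fin (m + 1) → ℝ) (hx : ∀ i, 0 < x i) :
    φ ((fun i => if (i : ℕ) ≤ k then zAv m x i else (zetav m k x : ℂ)),
        (fun j => zAv m x (embX m k hkm' j)), (fun _ => (1 : ℂ)))
      - psiY m k ((fun i => if (i : ℕ) ≤ k then zAv m x i else (zetav m k x : ℂ)),
        (fun j => zAv m x (embX m k hkm' j)), (fun _ => (1 : ℂ)))
      ≤ φ (zAv m x, (fun j => zAv m x (embX m k hkm' j)),
          (fun q => zAv m x (embY m k hkm' q)))
        - psiY m k (zAv m x, (fun j => zAv m x (embX m k hkm' j)),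
          (fun q => zAv m x (embY m k hkm' q))) := by
  have hklt : k < m := by omega
  have npos : 0 < m - k := by omega
  have hζvpos : 0 < zetav m k x := zetav_pos x hx
  set ζA : Fin (k + 1) → ℂ := fun j => zAv m x (embX m k hkm' j) with hζA
  set ys : Fin (m - k) → ℝ :=
    fun q => Real.log (x (embY m k hkm' q)) - Real.log (zetav m k x) with hys
  set p0 : YPt m k := pntv m k hkm' x 0 with hp0
  set ps : YPt m k := pntv m k hkm' x ys with hps
  -- the tail product and sum of ys
  have hTpos : 0 < ∏ i ∈ Finset.univ.filter (fun i : Fin (m + 1) => k + 1 ≤ (i : ℕ)), x i :=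
    Finset.prod_pos (fun i _ => hx i)
  have hcast : ((m - k : ℕ) : ℝ) = (m : ℝ) - (k : ℝ) := by
    push_cast [Nat.cast_sub hkm']
    ring
  have hmkne : (m : ℝ) - (k : ℝ) ≠ 0 := by
    have : (k : ℝ) < (m : ℝ) := by exact_mod_cast hklt
    linarith
  have hlogζ : Real.log (zetav m k x)
      = (1 / ((m : ℝ) - (k : ℝ))) *
        Real.log (∏ i ∈ Finset.univ.filter (fun i : Fin (m + 1) => k + 1 ≤ (i : ℕ)), x i) := by
    unfold zetav
    rw [Real.log_rpow hTpos]
  have hsumys : ∑ q, ys q = 0 := by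
    rw [hys]
    rw [Finset.sum_sub_distrib, Finset.sum_const, Finset.card_univ, Fintype.card_fin]
    have h1 : ∑ q : Fin (m - k), Real.log (x (embY m k hkm' q))
        = Real.log (∏ q : Fin (m - k), x (embY m k hkm' q)) :=
      (Real.log_prod (fun q _ => (hx _).ne')).symm
    rw [h1, ← prod_tail m k hkm' x, hlogζ, nsmul_eq_mul, hcast]
    field_simp
    simp
  -- identification of the B point
  have hB : (((fun i => if (i : ℕ) ≤ k then zAv m x i else (zetav m k x : ℂ)), ζA,
      (fun _ => (1 : ℂ))) : YPt m k) = p0 := by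
    refine Prod.ext ?_ (Prod.ext rfl ?_)
    · funext i
      show (if (i : ℕ) ≤ k then zAv m x i else (zetav m k x : ℂ)) = p0.1 i
      by_cases hi : (i : ℕ) ≤ k
      · rw [if_pos hi, show p0.1 i = zAv m x i from cYv_fst_head hkm' x _ i hi]
      · rw [if_neg hi, show p0.1 i = (zetav m k x : ℂ) *
          Complex.exp ((((0 : Fin (m - k) → ℝ) ⟨(i : ℕ) - (k + 1), by have := i.isLt; omega⟩ : ℝ) : ℂ))
          from cYv_fst_tail' hkm' x _ i hi]
        norm_num
    · funext q
      show (1 : ℂ) = Complex.exp ((((0 : Fin (m - k) → ℝ) q : ℝ) : ℂ))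
      norm_num
  -- identification of ps
  have hexp : ∀ q : Fin (m - k),
      zetav m k x * Real.exp (ys q) = x (embY m k hkm' q) := by
    intro q
    rw [hys]
    show zetav m k x * Real.exp (Real.log (x (embY m k hkm' q)) - Real.log (zetav m k x)) = _
    rw [Real.exp_sub, Real.exp_log (hx _), Real.exp_log hζvpos]
    field_simp
  have hzAtail : ∀ i : Fin (m + 1), ¬ ((i : ℕ) ≤ k) → zAv m x i = ((x i : ℝ) : ℂ) := by
    intro i hi
    have : i ≠ 0 := by
      intro h
      rw [h] at hi
      simp at hi
    unfold zAv
    rw [if_neg this]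
  have hz : ps.1 = zAv m x := by
    funext i
    by_cases hi : (i : ℕ) ≤ k
    · exact cYv_fst_head hkm' x _ i hi
    · rw [show ps.1 i = (zetav m k x : ℂ) *
          Complex.exp (((ys ⟨(i : ℕ) - (k + 1), by have := i.isLt; omega⟩ : ℝ) : ℂ))
          from cYv_fst_tail' hkm' x _ i hi]
      rw [hzAtail i hi, ← Complex.ofReal_exp, ← Complex.ofReal_mul]
      rw [hexp, embY_tidx m k hkm' i hi]
  have hη : (fun q => zAv m x (embY m k hkm' q)) = fun q => (zetav m k x : ℂ) * ps.2.2 q := by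
    funext q
    have h1 : zAv m x (embY m k hkm' q) = ((x (embY m k hkm' q) : ℝ) : ℂ) :=
      hzAtail _ (embY_not_le m k hkm' q)
    have h2 : ps.2.2 q = Complex.exp (((ys q : ℝ) : ℂ)) := rfl
    rw [h1, h2, ← Complex.ofReal_exp, ← Complex.ofReal_mul, hexp]
  -- scaling identifications
  have hφA : φ (zAv m x, ζA, (fun q => zAv m x (embY m k hkm' q))) = φ ps := by
    have hsc := hscal 1 1 ((zetav m k x : ℝ) : ℂ) one_ne_zero one_ne_zero
      (by simpa using hζvpos.ne') ps
    have htup : ((((1 : ℂ) • ps.1, (1 : ℂ) • ps.2.1,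
        ((zetav m k x : ℝ) : ℂ) • ps.2.2)) : YPt m k)
        = (zAv m x, ζA, (fun q => zAv m x (embY m k hkm' q))) := by
      refine Prod.ext ?_ (Prod.ext ?_ ?_)
      · show (1 : ℂ) • ps.1 = zAv m x
        rw [one_smul, hz]
      · show (1 : ℂ) • ps.2.1 = ζA
        rw [one_smul]
        rfl
      · show ((zetav m k x : ℝ) : ℂ) • ps.2.2 = (fun q => zAv m x (embY m k hkm' q))
        funext q
        rw [Pi.smul_apply, smul_eq_mul]
        exact (congrFun hη q).symm
    rw [← htup]
    exact hsc
  have hψA : psiY m k (zAv m x, ζA, (fun q => zAv m x (embY m k hkm' q))) = psiY m k ps := by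
    have hsc := psiY_scale m k hklt (zAv m x) ζA ps.2.2 (zetav m k x) hζvpos
      (fun q => Complex.exp_ne_zero _)
    have hps' : (zAv m x, ζA, ps.2.2) = ps := by
      rw [← hz]
      rfl
    rw [hη]
    exact hsc.trans (congrArg (psiY m k) hps')
  -- Jensen
  have hjen : Ftv m k hkm' x φ 0 ≤ Ftv m k hkm' x φ ys :=
    jensenY hkm' x φ hklt hx hG hadm ys hsumys
  -- potential + psi identities
  obtain ⟨ha1, ha2, ha3, ha4, ha5, _⟩ := pntv_pos hkm' x hklt hx 0
  obtain ⟨hb1, hb2, hb3, hb4, hb5, _⟩ := pntv_pos hkm' x hklt hx ys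
  have hmin0 := potv_add_psiY p0 ha1 ha2 ha3 ha4 ha5
  have hmins := potv_add_psiY ps hb1 hb2 hb3 hb4 hb5
  have hnums := nums_eq hkm' x hklt hx 0 ys (by rw [hsumys]; simp)
  have hkey : potv m k p0 + psiY m k p0 = potv m k ps + psiY m k ps := by
    rw [hmin0, hmins, hnums.1, hnums.2]
  have hFt0 : Ftv m k hkm' x φ 0 = potv m k p0 + φ p0 := rfl
  have hFts : Ftv m k hkm' x φ ys = potv m k ps + φ ps := rfl
  rw [hB, hφA, hψA]
  have h1 : φ p0 - psiY m k p0 = Ftv m k hkm' x φ 0 - (potv m k p0 + psiY m k p0) := by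
    rw [hFt0]; ring
  have h2 : φ ps - psiY m k ps = Ftv m k hkm' x φ ys - (potv m k ps + psiY m k ps) := by
    rw [hFts]; ring
  rw [h1, h2, hkey]
  exact sub_le_sub_right hjen _

end Main

theorem stmt14 (m k : ℕ) (hm : 2 ≤ m) (hk : 1 ≤ k) (hkm : k ≤ m - 1)
    (φ : YPt m k → ℝ)
    (hcont : ContinuousOn φ {p | inYhat m k (by omega) p})
    (hscal : TriScalInv m k φ) (hG : GInvY m k (by omega) φ)
    (hadm : AdmY m k (by omega) φ)
    (x : Fin (m + 1) → ℝ) (hx : ∀ i, 0 < x i) :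
    let zA : Fin (m + 1) → ℂ := fun i => if i = 0 then 1 else (x i : ℂ)
    let ζA : Fin (k + 1) → ℂ := fun j => zA (embX m k (by omega) j)
    let ηA : Fin (m - k) → ℂ := fun q => zA (embY m k (by omega) q)
    let ζv : ℝ := (∏ i ∈ Finset.univ.filter (fun i : Fin (m + 1) => k + 1 ≤ (i : ℕ)), x i) ^
      (1 / ((m : ℝ) - (k : ℝ)))
    let zB : Fin (m + 1) → ℂ := fun i => if (i : ℕ) ≤ k then zA i else (ζv : ℂ)
    let oneη : Fin (m - k) → ℂ := fun _ => 1
    φ (zB, ζA, oneη) - psiY m k (zB, ζA, oneη) ≤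
      φ (zA, ζA, ηA) - psiY m k (zA, ζA, ηA) := by
  intro zA ζA ηA ζv zB oneη
  exact mainY m k hm hk hkm (by omega) φ hscal hG hadm x hx
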